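/- Consider minimizing f(P_s) = P_s + c(P_s)·(SNR_target - P_s·|h|²)⁺ over P_s > 0, where c(P_s) is a positive step function that is constant on each interval [SNR_target/|f_i|², SNR_target/|f_{i+1}|²) (with |f_1|² > ... > |f_N|² > 0 and right-continuous jumps only at the points SNR_target/|f_i|²). Then the minimum of f is attained at a point of the set {SNR_target/|f_1|², ..., SNR_target/|f_M|², SNR_target/|h|²}, where M is the number of indices i with |f_i|² > |h|². -/
import Mathlib


open Real Set

/-- Minimize `f(P_s) = P_s + c(P_s)·(SNR_target - P_s·|h|²)⁺` over admissible
source powers, where `c` is a positive, nonincreasing step function that is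
constant between consecutive points `SNR_target/|f_i|²` (it only depends on
which thresholds `SNR_target/|f_i|²` have been passed, with jumps only at those
points, intervals closed on the left, i.e. right-continuous). With
`|f_1|² > ... > |f_N|² > 0`, the minimum of `f` is attained at a point of the
set `{SNR_target/|f_i|² : |f_i|² > |h|²} ∪ {SNR_target/|h|²}`. -/
theorem source_power_candidates (N : ℕ) (hN : 0 < N) (fs : Fin N → ℝ) (h S : ℝ)
    (hfs : ∀ i, 0 < fs i) (hsorted : ∀ i j : Fin N, i < j → fs j < fs i)
    (hh : 0 < h) (hS : 0 < S)
    (c : ℝ → ℝ) (hc : ∀ P, 0 < c P) (hmono : Antitone c)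
    (hstep : ∀ P Q : ℝ, (∀ i : Fin N, (S / fs i ≤ P ↔ S / fs i ≤ Q)) → c P = c Q) :
    ∀ P : ℝ, S / fs ⟨0, hN⟩ ≤ P →
      ∃ Q : ℝ, ((∃ i : Fin N, h < fs i ∧ Q = S / fs i) ∨ Q = S / h) ∧
        Q + c Q * max 0 (S - Q * h) ≤ P + c P * max 0 (S - P * h) := by
  intro P hP
  have hSh0 : max 0 (S - S / h * h) = 0 := by
    rw [div_mul_cancel₀ _ (ne_of_gt hh)]; simp
  by_cases hPh : S - P * h ≤ 0
  · refine ⟨S / h, Or.inr rfl, ?_⟩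
    rw [hSh0, mul_zero, add_zero]
    have h1 : S / h ≤ P := (div_le_iff₀ hh).2 (by linarith)
    have h2 : 0 ≤ c P * max 0 (S - P * h) :=
      mul_nonneg (hc P).le (le_max_left _ _)
    linarith
  · push_neg at hPh
    have hPltSh : P < S / h := (lt_div_iff₀ hh).2 (by linarith)
    have hmaxP : max 0 (S - P * h) = S - P * h := max_eq_right (by linarith)
    by_cases hch : c P * h ≤ 1
    · -- take the largest threshold ≤ P
      set T := Finset.univ.filter (fun i : Fin N => S / fs i ≤ P) with hT
      have hTne : T.Nonempty := ⟨⟨0, hN⟩, by simp [hT, hP]⟩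
      set i₀ := T.max' hTne with hi₀
      have hi₀mem : i₀ ∈ T := T.max'_mem hTne
      have hQP : S / fs i₀ ≤ P := by
        have := hi₀mem; simp [hT] at this; exact this
      have hfsh : h < fs i₀ := by
        have h1 : S / fs i₀ < S / h := lt_of_le_of_lt hQP hPltSh
        rw [div_lt_div_iff₀ (hfs i₀) hh] at h1
        exact lt_of_mul_lt_mul_left (by linarith [h1]) hS.le
      refine ⟨S / fs i₀, Or.inl ⟨i₀, hfsh, rfl⟩, ?_⟩
      have hcQ : c (S / fs i₀) = c P := by
        apply hstep
        intro i
        constructor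
        · intro hi; exact le_trans hi hQP
        · intro hi
          have hiT : i ∈ T := by simp [hT, hi]
          have hle : i ≤ i₀ := T.le_max' i hiT
          have hfsle : fs i₀ ≤ fs i := by
            rcases lt_or_eq_of_le hle with h' | h'
            · exact (hsorted i i₀ h').le
            · rw [h']
          exact div_le_div_of_nonneg_left hS.le (hfs i₀) hfsle
      have hQpos : 0 < S / fs i₀ := div_pos hS (hfs i₀)
      have hmaxQ : max 0 (S - S / fs i₀ * h) = S - S / fs i₀ * h :=
        max_eq_right (by nlinarith)
      rw [hcQ, hmaxP, hmaxQ]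
      nlinarith [mul_nonneg (sub_nonneg.2 hQP) (sub_nonneg.2 hch), hh.le]
    · push_neg at hch
      refine ⟨S / h, Or.inr rfl, ?_⟩
      rw [hSh0, mul_zero, add_zero, hmaxP, div_le_iff₀ hh]
      nlinarith [mul_lt_mul_of_pos_right hch hPh]
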